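/- arXiv:1709.00257 — 5 statements merged into one kernel-verified Lean document; each statement's English description precedes it below -/
import Mathlib

section
/- Let h ∈ ℝ^N with block structure of n blocks of length d, let T₀ index the k blocks of h with largest ℓ₂ norm, and decompose T₀^c into disjoint sets T₁, T₂, … each of size ak (a > 1 integer), sorted so that T_j contains the blocks of largest ℓ₂ norm among those not in T₀ ∪ T₁ ∪ ⋯ ∪ T_{j-1}. Then for 0 < p ≤ 1: ‖h_{(T₀∪T₁)^c}‖_2^p ≤ (ak)^{p/2-1} ‖h_{T₀^c}‖_{2,p}^p. -/
/-!
Each group `G (j + 1)`, `j ≥ 1`, is controlled by the one before it: if `c` is its largest block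
norm, every block of the full group `G j` of `a k` blocks has norm at least `c`, so
`‖h_{G (j+1)}‖₂^p ≤ (a k)^(p/2) c^p ≤ (a k)^(p/2 - 1) ‖h_{G j}‖_{2,p}^p`. Subadditivity of
`t ↦ t^(p/2)` on `[0, ∞)` bounds `‖h_{(G₀ ∪ G₁)ᶜ}‖₂^p` by the sum of these group bounds over
`j ≥ 1`, which is `(a k)^(p/2 - 1) ‖h_{G₀ᶜ}‖_{2,p}^p`.
-/

open Finset Function

lemma rpow_sum_le_sum_rpow_of_le_one {ι : Type*} {s : Finset ι} {x : ι → ℝ}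
    (hx : ∀ i ∈ s, 0 ≤ x i) {q : ℝ} (hq : 0 < q) (hq1 : q ≤ 1) :
    (∑ i ∈ s, x i) ^ q ≤ ∑ i ∈ s, x i ^ q :=
  le_sum_of_subadditive_on_pred (· ^ q) (0 ≤ ·) (by simp [Real.zero_rpow hq.ne'])
    (fun _ _ ha hb => Real.rpow_add_le_add_rpow ha hb hq.le hq1) (fun _ _ => add_nonneg) x hx

lemma sqrt_sum_rpow_le_sum_sqrt_rpow {ι : Type*} {s : Finset ι} {x : ι → ℝ}
    (hx : ∀ i ∈ s, 0 ≤ x i) {p : ℝ} (hp : 0 < p) (hp2 : p ≤ 2) :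
    √(∑ i ∈ s, x i) ^ p ≤ ∑ i ∈ s, √(x i) ^ p := by
  rw [← Real.rpow_div_two_eq_sqrt p (sum_nonneg hx)]
  calc (∑ i ∈ s, x i) ^ (p / 2) ≤ ∑ i ∈ s, x i ^ (p / 2) :=
        rpow_sum_le_sum_rpow_of_le_one hx (by linarith) (by linarith)
    _ = ∑ i ∈ s, √(x i) ^ p :=
        sum_congr rfl fun i hi => Real.rpow_div_two_eq_sqrt p (hx i hi)

lemma sqrt_sum_sq_rpow_le_of_forall_le {ι : Type*} {s t : Finset ι} {f : ι → ℝ} {m : ℕ} {p : ℝ}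
    (hp : 0 < p) (hf : ∀ i, 0 ≤ f i) (hs : #s ≤ m) (ht : s.Nonempty → #t = m)
    (hst : ∀ i ∈ s, ∀ j ∈ t, f i ≤ f j) :
    √(∑ i ∈ s, f i ^ 2) ^ p ≤ (m : ℝ) ^ (p / 2 - 1) * ∑ j ∈ t, f j ^ p := by
  rcases s.eq_empty_or_nonempty with rfl | hne
  · simp only [sum_empty, Real.sqrt_zero, Real.zero_rpow hp.ne']
    exact mul_nonneg (by positivity) (sum_nonneg fun j _ => Real.rpow_nonneg (hf j) p)
  obtain ⟨i₀, hi₀, hmax⟩ := s.exists_max_image f hne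
  have hm : (0 : ℝ) < m := by exact_mod_cast (card_pos.2 hne).trans_le hs
  have hc : 0 ≤ f i₀ := hf i₀
  have hsum : ∑ i ∈ s, f i ^ 2 ≤ m * f i₀ ^ 2 := by
    calc ∑ i ∈ s, f i ^ 2 ≤ #s • f i₀ ^ 2 :=
          sum_le_card_nsmul _ _ _ fun i hi => pow_le_pow_left₀ (hf i) (hmax i hi) 2
      _ ≤ m * f i₀ ^ 2 := by rw [nsmul_eq_mul]; gcongr
  have hmass : m * f i₀ ^ p ≤ ∑ j ∈ t, f j ^ p := by
    calc (m : ℝ) * f i₀ ^ p = #t • f i₀ ^ p := by rw [nsmul_eq_mul, ht hne]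
      _ ≤ ∑ j ∈ t, f j ^ p :=
          card_nsmul_le_sum _ _ _ fun j hj => Real.rpow_le_rpow hc (hst i₀ hi₀ j hj) hp.le
  calc √(∑ i ∈ s, f i ^ 2) ^ p ≤ √(m * f i₀ ^ 2) ^ p := by gcongr
    _ = (m : ℝ) ^ (p / 2 - 1) * (m * f i₀ ^ p) := by
        rw [Real.sqrt_mul hm.le, Real.sqrt_sq hc, Real.mul_rpow (Real.sqrt_nonneg _) hc,
          ← Real.rpow_div_two_eq_sqrt p hm.le, Real.rpow_sub_one hm.ne']
        field_simp
    _ ≤ (m : ℝ) ^ (p / 2 - 1) * ∑ j ∈ t, f j ^ p := by gcongr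

section Partition

variable {ι : Type*} {G : ℕ → Finset ι}

lemma exists_bound_of_forall_mem [Fintype ι] (hcover : ∀ x, ∃ j, x ∈ G j) :
    ∃ N, ∀ x, ∃ j < N, x ∈ G j := by
  choose σ hσ using hcover
  exact ⟨univ.sup σ + 1, fun x => ⟨σ x, Nat.lt_succ_of_le (le_sup (mem_univ x)), hσ x⟩⟩

variable [DecidableEq ι] [Fintype ι]

lemma compl_biUnion_range_eq_biUnion_Ico (hdisj : Pairwise (Disjoint on G)) {N : ℕ}
    (hN : ∀ x, ∃ j < N, x ∈ G j) (m : ℕ) :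
    ((range m).biUnion G)ᶜ = (Ico m N).biUnion G := by
  ext x
  simp only [mem_compl, mem_biUnion, mem_range, mem_Ico, not_exists, not_and]
  constructor
  · intro hx
    obtain ⟨j, hjN, hxj⟩ := hN x
    exact ⟨j, ⟨not_lt.1 fun hjm => hx j hjm hxj, hjN⟩, hxj⟩
  · rintro ⟨j, ⟨hmj, -⟩, hxj⟩ i him hxi
    exact disjoint_left.1 (hdisj (by omega : i ≠ j)) hxi hxj

lemma sum_compl_biUnion_range {M : Type*} [AddCommMonoid M] (hdisj : Pairwise (Disjoint on G))
    {N : ℕ} (hN : ∀ x, ∃ j < N, x ∈ G j) (m : ℕ) (f : ι → M) :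
    ∑ x ∈ ((range m).biUnion G)ᶜ, f x = ∑ j ∈ Ico m N, ∑ x ∈ G j, f x := by
  rw [compl_biUnion_range_eq_biUnion_Ico hdisj hN, sum_biUnion (hdisj.set_pairwise _)]

end Partition

theorem block_decomposition_tail_bound_general (n d k a : ℕ) (p : ℝ) (hp : 0 < p) (hp1 : p ≤ 1)
    (h : Fin n → EuclideanSpace ℝ (Fin d)) (G : ℕ → Finset (Fin n))
    (hdisj : ∀ i j, i ≠ j → Disjoint (G i) (G j))
    (hcover : ∀ i : Fin n, ∃ j, i ∈ G j)
    (hcard : ∀ j, 1 ≤ j → (G j).card ≤ a * k)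
    (hfull : ∀ j, 1 ≤ j → (G (j + 1)).Nonempty → (G j).card = a * k)
    (hsort : ∀ j, ∀ i ∈ G (j + 1), ∀ i' ∈ G j, ‖h i‖ ≤ ‖h i'‖) :
    Real.sqrt (∑ i ∈ (G 0 ∪ G 1)ᶜ, ‖h i‖ ^ 2) ^ p ≤
      ((a : ℝ) * k) ^ (p / 2 - 1) * ∑ i ∈ (G 0)ᶜ, ‖h i‖ ^ p := by
  obtain ⟨N, hN⟩ := exists_bound_of_forall_mem hcover
  have hN1 : ∀ x, ∃ j < N + 1, x ∈ G j := fun x =>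
    (hN x).imp fun _ ⟨hj, hx⟩ => ⟨Nat.lt_succ_of_lt hj, hx⟩
  have hG01 : G 0 ∪ G 1 = (range 2).biUnion G := by simp [range_add_one, union_comm]
  have hG0 : G 0 = (range 1).biUnion G := by simp
  have hgroup : ∀ j ∈ Ico 1 N, √(∑ i ∈ G (j + 1), ‖h i‖ ^ 2) ^ p ≤
      ((a : ℝ) * k) ^ (p / 2 - 1) * ∑ i ∈ G j, ‖h i‖ ^ p := fun j hj => by
    exact_mod_cast sqrt_sum_sq_rpow_le_of_forall_le hp (fun i => norm_nonneg (h i))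
      (hcard (j + 1) (by omega)) (hfull j (mem_Ico.1 hj).1) (hsort j)
  calc √(∑ i ∈ (G 0 ∪ G 1)ᶜ, ‖h i‖ ^ 2) ^ p
      = √(∑ j ∈ Ico 1 N, ∑ i ∈ G (j + 1), ‖h i‖ ^ 2) ^ p := by
        rw [hG01, sum_compl_biUnion_range hdisj hN1,
          sum_Ico_add' (fun j => ∑ i ∈ G j, ‖h i‖ ^ 2) 1 N 1]
    _ ≤ ∑ j ∈ Ico 1 N, √(∑ i ∈ G (j + 1), ‖h i‖ ^ 2) ^ p :=
        sqrt_sum_rpow_le_sum_sqrt_rpow (fun _ _ => sum_nonneg fun _ _ => by positivity) hp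
          (by linarith)
    _ ≤ ∑ j ∈ Ico 1 N, ((a : ℝ) * k) ^ (p / 2 - 1) * ∑ i ∈ G j, ‖h i‖ ^ p := sum_le_sum hgroup
    _ = ((a : ℝ) * k) ^ (p / 2 - 1) * ∑ i ∈ (G 0)ᶜ, ‖h i‖ ^ p := by
        rw [← mul_sum, hG0, sum_compl_biUnion_range hdisj hN]

/-- For a greedy decomposition of the blocks of `h` into `G 0` (the `k` largest
blocks) and groups `G j`, `j ≥ 1`, of `a*k` blocks each (sorted by decreasing block ℓ₂-norm,
possibly a smaller last group), one has
`‖h_{(G₀∪G₁)ᶜ}‖₂^p ≤ (ak)^(p/2-1) ‖h_{G₀ᶜ}‖_{2,p}^p` for `0 < p ≤ 1`. -/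
theorem block_decomposition_tail_bound (n d k a : ℕ) (p : ℝ) (hp : 0 < p) (hp1 : p ≤ 1)
    (hk : 0 < k) (ha : 1 < a)
    (h : Fin n → EuclideanSpace ℝ (Fin d)) (G : ℕ → Finset (Fin n))
    (hG0 : (G 0).card = k)
    (hdisj : ∀ i j, i ≠ j → Disjoint (G i) (G j))
    (hcover : ∀ i : Fin n, ∃ j, i ∈ G j)
    (hcard : ∀ j, 1 ≤ j → (G j).card ≤ a * k)
    (hfull : ∀ j, 1 ≤ j → (G (j + 1)).Nonempty → (G j).card = a * k)
    (hsort : ∀ j, ∀ i ∈ G (j + 1), ∀ i' ∈ G j, ‖h i‖ ≤ ‖h i'‖) :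
    Real.sqrt (∑ i ∈ (G 0 ∪ G 1)ᶜ, ‖h i‖ ^ 2) ^ p ≤
      ((a : ℝ) * k) ^ (p / 2 - 1) * ∑ i ∈ (G 0)ᶜ, ‖h i‖ ^ p :=
  block_decomposition_tail_bound_general n d k a p hp hp1 h G hdisj hcover hcard hfull hsort
end

section
/- Let x, h ∈ ℝ^N with block structure over index set {1,…,n}, let T₀, T̃ ⊂ {1,…,n}, 0 ≤ ω ≤ 1, and 0 < p ≤ 1. Suppose ω‖x_{T̃} + h_{T̃}‖_{2,p}^p + ‖x_{T̃^c} + h_{T̃^c}‖_{2,p}^p ≤ ω‖x_{T̃}‖_{2,p}^p + ‖x_{T̃^c}‖_{2,p}^p. Then ω‖h_{T̃∩T₀^c}‖_{2,p}^p + ‖h_{T̃^c∩T₀^c}‖_{2,p}^p ≤ ‖h_{T̃^c∩T₀}‖_{2,p}^p + ω‖h_{T̃∩T₀}‖_{2,p}^p + 2(‖x_{T̃^c∩T₀^c}‖_{2,p}^p + ω‖x_{T̃∩T₀^c}‖_{2,p}^p). -/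
/-!
Write `J(v) = ∑ᵢ wᵢ ‖vᵢ‖ᵖ` with weight `ω` on `T̃` and `1` off it. Split both sides of
`J(x + h) ≤ J(x)` along `T₀`. On `T₀` the reverse triangle inequality for the `p`-th power
gives `J_{T₀}(x + h) ≥ J_{T₀}(x) - J_{T₀}(h)`, and on `T₀ᶜ` it gives
`J_{T₀ᶜ}(x + h) ≥ J_{T₀ᶜ}(h) - J_{T₀ᶜ}(x)`; comparing with `J_{T₀}(x) + J_{T₀ᶜ}(x)` yields
`J_{T₀ᶜ}(h) ≤ J_{T₀}(h) + 2 J_{T₀ᶜ}(x)`.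
-/

open Finset

lemma norm_rpow_le_norm_add_rpow_add_norm_rpow {E : Type*} [NormedAddCommGroup E] {p : ℝ}
    (hp0 : 0 ≤ p) (hp1 : p ≤ 1) (a b : E) : ‖a‖ ^ p ≤ ‖a + b‖ ^ p + ‖b‖ ^ p :=
  calc ‖a‖ ^ p ≤ (‖a + b‖ + ‖b‖) ^ p :=
        Real.rpow_le_rpow (norm_nonneg _) (norm_le_add_norm_add a b) hp0
    _ ≤ ‖a + b‖ ^ p + ‖b‖ ^ p :=
        Real.rpow_add_le_add_rpow (norm_nonneg _) (norm_nonneg _) hp0 hp1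

theorem sum_weighted_norm_rpow_compl_le {ι E : Type*} [Fintype ι] [DecidableEq ι]
    [NormedAddCommGroup E] {p : ℝ} (hp0 : 0 ≤ p) (hp1 : p ≤ 1) {w : ι → ℝ} (hw : ∀ i, 0 ≤ w i)
    (x h : ι → E) (T : Finset ι) (hopt : ∑ i, w i * ‖x i + h i‖ ^ p ≤ ∑ i, w i * ‖x i‖ ^ p) :
    ∑ i ∈ Tᶜ, w i * ‖h i‖ ^ p ≤ ∑ i ∈ T, w i * ‖h i‖ ^ p + 2 * ∑ i ∈ Tᶜ, w i * ‖x i‖ ^ p := by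
  have on_T : ∑ i ∈ T, w i * ‖x i‖ ^ p ≤
      ∑ i ∈ T, w i * ‖x i + h i‖ ^ p + ∑ i ∈ T, w i * ‖h i‖ ^ p := by
    rw [← sum_add_distrib]
    refine sum_le_sum fun i _ => ?_
    rw [← mul_add]
    exact mul_le_mul_of_nonneg_left
      (norm_rpow_le_norm_add_rpow_add_norm_rpow hp0 hp1 (x i) (h i)) (hw i)
  have on_compl : ∑ i ∈ Tᶜ, w i * ‖h i‖ ^ p ≤
      ∑ i ∈ Tᶜ, w i * ‖x i + h i‖ ^ p + ∑ i ∈ Tᶜ, w i * ‖x i‖ ^ p := by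
    rw [← sum_add_distrib]
    refine sum_le_sum fun i _ => ?_
    rw [← mul_add, add_comm (x i)]
    exact mul_le_mul_of_nonneg_left
      (norm_rpow_le_norm_add_rpow_add_norm_rpow hp0 hp1 (h i) (x i)) (hw i)
  rw [← sum_add_sum_compl T, ← sum_add_sum_compl T (fun i => w i * ‖x i‖ ^ p)] at hopt
  linarith

lemma sum_ite_mem_mul_eq {ι : Type*} [Fintype ι] [DecidableEq ι] (s t : Finset ι) (ω : ℝ)
    (f : ι → ℝ) :
    ∑ i ∈ s, (if i ∈ t then ω else 1) * f i = ω * ∑ i ∈ t ∩ s, f i + ∑ i ∈ tᶜ ∩ s, f i := by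
  simp only [ite_mul, one_mul, sum_ite, ← mul_sum, filter_mem_eq_inter, filter_notMem_eq_sdiff,
    sdiff_eq_inter_compl, inter_comm s]

theorem weighted_cone_condition_general (n d : ℕ) (p ω : ℝ) (hp : 0 < p) (hp1 : p ≤ 1)
    (hω0 : 0 ≤ ω)
    (x h : Fin n → EuclideanSpace ℝ (Fin d)) (T0 Tt : Finset (Fin n))
    (hopt : ω * ∑ i ∈ Tt, ‖x i + h i‖ ^ p + ∑ i ∈ Ttᶜ, ‖x i + h i‖ ^ p ≤
      ω * ∑ i ∈ Tt, ‖x i‖ ^ p + ∑ i ∈ Ttᶜ, ‖x i‖ ^ p) :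
    ω * ∑ i ∈ Tt ∩ T0ᶜ, ‖h i‖ ^ p + ∑ i ∈ Ttᶜ ∩ T0ᶜ, ‖h i‖ ^ p ≤
      ∑ i ∈ Ttᶜ ∩ T0, ‖h i‖ ^ p + ω * ∑ i ∈ Tt ∩ T0, ‖h i‖ ^ p +
      2 * (∑ i ∈ Ttᶜ ∩ T0ᶜ, ‖x i‖ ^ p + ω * ∑ i ∈ Tt ∩ T0ᶜ, ‖x i‖ ^ p) := by
  have hw : ∀ i, 0 ≤ if i ∈ Tt then ω else 1 := fun i => by split_ifs <;> positivity
  have cone := sum_weighted_norm_rpow_compl_le hp.le hp1 hw x h T0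
  simp only [sum_ite_mem_mul_eq, inter_univ] at cone
  linarith [cone hopt]

/-- Cone condition derived from the optimality of the weighted mixed
ℓ₂/ℓ_p objective. -/
theorem weighted_cone_condition (n d : ℕ) (p ω : ℝ) (hp : 0 < p) (hp1 : p ≤ 1)
    (hω0 : 0 ≤ ω) (hω1 : ω ≤ 1)
    (x h : Fin n → EuclideanSpace ℝ (Fin d)) (T0 Tt : Finset (Fin n))
    (hopt : ω * ∑ i ∈ Tt, ‖x i + h i‖ ^ p + ∑ i ∈ Ttᶜ, ‖x i + h i‖ ^ p ≤
      ω * ∑ i ∈ Tt, ‖x i‖ ^ p + ∑ i ∈ Ttᶜ, ‖x i‖ ^ p) :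
    ω * ∑ i ∈ Tt ∩ T0ᶜ, ‖h i‖ ^ p + ∑ i ∈ Ttᶜ ∩ T0ᶜ, ‖h i‖ ^ p ≤
      ∑ i ∈ Ttᶜ ∩ T0, ‖h i‖ ^ p + ω * ∑ i ∈ Tt ∩ T0, ‖h i‖ ^ p +
      2 * (∑ i ∈ Ttᶜ ∩ T0ᶜ, ‖x i‖ ^ p + ω * ∑ i ∈ Tt ∩ T0ᶜ, ‖x i‖ ^ p) :=
  weighted_cone_condition_general n d p ω hp hp1 hω0 x h T0 Tt hopt
end

section
/- Under the hypotheses of the previous cone-condition derivation, with S = (T̃ ∩ T₀^c) ∪ (T̃^c ∩ T₀) and x supported on T₀ (so x_{T₀^c} = 0), the error vector h satisfies: ‖h_{T₀^c}‖_{2,p}^p ≤ ω‖h_{T₀}‖_{2,p}^p + (1−ω)‖h_S‖_{2,p}^p. -/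
private lemma rpow_triangle {E : Type*} [NormedAddCommGroup E] (u v : E) {p : ℝ}
    (hp : 0 ≤ p) (hp1 : p ≤ 1) : ‖u + v‖ ^ p ≤ ‖u‖ ^ p + ‖v‖ ^ p := by
  have h1 : ‖u + v‖₊ ^ p ≤ (‖u‖₊ + ‖v‖₊) ^ p :=
    NNReal.rpow_le_rpow (nnnorm_add_le u v) hp
  have h2 := NNReal.rpow_add_le_add_rpow ‖u‖₊ ‖v‖₊ hp hp1
  have := h1.trans h2
  have hc := NNReal.coe_le_coe.2 this
  simpa [NNReal.coe_rpow, coe_nnnorm] using hc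

/-- For `x` exactly block sparse supported on `T₀`, and `h` the error of a
minimizer of the weighted objective, with `S = (T̃ ∩ T₀ᶜ) ∪ (T̃ᶜ ∩ T₀)`:
`‖h_{T₀ᶜ}‖_{2,p}^p ≤ ω‖h_{T₀}‖_{2,p}^p + (1-ω)‖h_S‖_{2,p}^p`. -/
theorem weighted_cone_condition_sparse (n d : ℕ) (p ω : ℝ) (hp : 0 < p) (hp1 : p ≤ 1)
    (hω0 : 0 ≤ ω) (hω1 : ω ≤ 1)
    (x h : Fin n → EuclideanSpace ℝ (Fin d)) (T0 Tt : Finset (Fin n))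
    (hsupp : ∀ i ∉ T0, x i = 0)
    (hopt : ω * ∑ i ∈ Tt, ‖x i + h i‖ ^ p + ∑ i ∈ Ttᶜ, ‖x i + h i‖ ^ p ≤
      ω * ∑ i ∈ Tt, ‖x i‖ ^ p + ∑ i ∈ Ttᶜ, ‖x i‖ ^ p) :
    ∑ i ∈ T0ᶜ, ‖h i‖ ^ p ≤
      ω * ∑ i ∈ T0, ‖h i‖ ^ p +
        (1 - ω) * ∑ i ∈ (Tt ∩ T0ᶜ) ∪ (Ttᶜ ∩ T0), ‖h i‖ ^ p := by
  classical
  set a : Fin n → ℝ := fun i => ‖x i + h i‖ ^ p with ha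
  set b : Fin n → ℝ := fun i => ‖x i‖ ^ p with hb
  set c : Fin n → ℝ := fun i => ‖h i‖ ^ p with hc
  -- split any sum over s into s ∩ t and s ∩ tᶜ
  have hsplit : ∀ (s t : Finset (Fin n)) (f : Fin n → ℝ),
      ∑ i ∈ s, f i = ∑ i ∈ s ∩ t, f i + ∑ i ∈ s ∩ tᶜ, f i := by
    intro s t f
    rw [← Finset.sdiff_eq_inter_compl, Finset.sum_inter_add_sum_sdiff]
  -- on T0ᶜ, x vanishes
  have hax : ∀ i ∈ T0ᶜ, a i = c i := by
    intro i hi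
    simp [ha, hc, hsupp i (Finset.mem_compl.mp hi)]
  have hbx : ∀ i ∈ T0ᶜ, b i = 0 := by
    intro i hi
    simp [hb, hsupp i (Finset.mem_compl.mp hi), Real.zero_rpow hp.ne']
  -- pointwise triangle: b i ≤ a i + c i
  have hkey : ∀ i, b i ≤ a i + c i := by
    intro i
    have : x i = (x i + h i) + (-h i) := by abel
    calc b i = ‖(x i + h i) + (-h i)‖ ^ p := by rw [hb, ← this]
      _ ≤ ‖x i + h i‖ ^ p + ‖-h i‖ ^ p := rpow_triangle _ _ hp.le hp1
      _ = a i + c i := by rw [ha, hc, norm_neg]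
  -- sums over the four pieces
  have e1 := hsplit Tt T0 a
  have e1b := hsplit Tt T0 b
  have e2 := hsplit Ttᶜ T0 a
  have e2b := hsplit Ttᶜ T0 b
  have e3 : ∑ i ∈ T0, c i = ∑ i ∈ T0 ∩ Tt, c i + ∑ i ∈ T0 ∩ Ttᶜ, c i := hsplit T0 Tt c
  have e4 : ∑ i ∈ T0ᶜ, c i = ∑ i ∈ T0ᶜ ∩ Tt, c i + ∑ i ∈ T0ᶜ ∩ Ttᶜ, c i := hsplit T0ᶜ Tt c
  -- rewrite intersections consistently
  have i1 : T0 ∩ Tt = Tt ∩ T0 := Finset.inter_comm _ _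
  have i2 : T0 ∩ Ttᶜ = Ttᶜ ∩ T0 := Finset.inter_comm _ _
  have i3 : T0ᶜ ∩ Tt = Tt ∩ T0ᶜ := Finset.inter_comm _ _
  have i4 : T0ᶜ ∩ Ttᶜ = Ttᶜ ∩ T0ᶜ := Finset.inter_comm _ _
  rw [i1, i2] at e3
  rw [i3, i4] at e4
  -- a = c and b = 0 on the T0ᶜ pieces
  have q1 : ∑ i ∈ Tt ∩ T0ᶜ, a i = ∑ i ∈ Tt ∩ T0ᶜ, c i :=
    Finset.sum_congr rfl fun i hi => hax i (Finset.mem_of_mem_inter_right hi)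
  have q2 : ∑ i ∈ Ttᶜ ∩ T0ᶜ, a i = ∑ i ∈ Ttᶜ ∩ T0ᶜ, c i :=
    Finset.sum_congr rfl fun i hi => hax i (Finset.mem_of_mem_inter_right hi)
  have q3 : ∑ i ∈ Tt ∩ T0ᶜ, b i = 0 :=
    Finset.sum_eq_zero fun i hi => hbx i (Finset.mem_of_mem_inter_right hi)
  have q4 : ∑ i ∈ Ttᶜ ∩ T0ᶜ, b i = 0 :=
    Finset.sum_eq_zero fun i hi => hbx i (Finset.mem_of_mem_inter_right hi)
  -- b ≤ a + c summed over T0 pieces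
  have s1 : ∑ i ∈ Tt ∩ T0, b i ≤ ∑ i ∈ Tt ∩ T0, a i + ∑ i ∈ Tt ∩ T0, c i := by
    rw [← Finset.sum_add_distrib]; exact Finset.sum_le_sum fun i _ => hkey i
  have s3 : ∑ i ∈ Ttᶜ ∩ T0, b i ≤ ∑ i ∈ Ttᶜ ∩ T0, a i + ∑ i ∈ Ttᶜ ∩ T0, c i := by
    rw [← Finset.sum_add_distrib]; exact Finset.sum_le_sum fun i _ => hkey i
  -- disjoint union S
  have hdisj : Disjoint (Tt ∩ T0ᶜ) (Ttᶜ ∩ T0) := by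
    apply Finset.disjoint_left.mpr
    intro i hi1 hi2
    exact (Finset.mem_compl.mp (Finset.mem_of_mem_inter_left hi2))
      (Finset.mem_of_mem_inter_left hi1)
  have e5 : ∑ i ∈ (Tt ∩ T0ᶜ) ∪ (Ttᶜ ∩ T0), c i
      = ∑ i ∈ Tt ∩ T0ᶜ, c i + ∑ i ∈ Ttᶜ ∩ T0, c i := Finset.sum_union hdisj
  -- nonnegativity of key sums
  have hcn : ∀ (s : Finset (Fin n)), 0 ≤ ∑ i ∈ s, c i := by
    intro s; exact Finset.sum_nonneg fun i _ => Real.rpow_nonneg (norm_nonneg _) p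
  -- abbreviate
  rw [e1, e2] at hopt
  rw [e1b, e2b] at hopt
  rw [q1, q2, q3, q4] at hopt
  rw [e3, e4, e5]
  -- now hopt : ω*(A1a + A2c) + (A3a + A4c) ≤ ω*(A1b + 0) + (A3b + 0)
  -- goal : A2c + A4c ≤ ω*(A1c + A3c) + (1-ω)*(A2c + A3c)
  nlinarith [mul_le_mul_of_nonneg_left s1 hω0, s3, hcn (Tt ∩ T0ᶜ), hcn (Ttᶜ ∩ T0),
    hcn (Tt ∩ T0), hcn (Ttᶜ ∩ T0ᶜ),
    mul_le_mul_of_nonneg_right (hcn (Tt ∩ T0ᶜ)) hω0]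
end

section
/- (Necessity of weighted block p-NSP) Assume every block k-sparse signal x ∈ ℝ^N, supported on any block index set T₀ with |T₀| ≤ k, is the unique solution of the weighted mixed ℓ₂/ℓ_p minimization min_z ω‖z_{T̃}‖_{2,p}^p + ‖z_{T̃^c}‖_{2,p}^p subject to Az = Ax, for every T̃ ∈ Γ_s(T₀). Then for every h in the null space of A with h ≠ 0, every T with |T| ≤ k, and every S with |S| ≤ s: ω‖h_T‖_{2,p}^p + (1−ω)‖h_S‖_{2,p}^p < ‖h_{T^c}‖_{2,p}^p. -/
/-- Necessity of the weighted block p-NSP: if every block `k`-sparse signal is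
the unique solution of the weighted mixed ℓ₂/ℓ_p minimization for every support estimate
`T̃ ∈ Γ_s(T₀)`, then for every nonzero `h` in the null space of `A`, every `|T| ≤ k` and
`|S| ≤ s`: `ω‖h_T‖_{2,p}^p + (1-ω)‖h_S‖_{2,p}^p < ‖h_{Tᶜ}‖_{2,p}^p`. -/
theorem weighted_block_pNSP_necessity (n d m k s : ℕ) (p ω : ℝ)
    (hp : 0 < p) (hp1 : p ≤ 1) (hω0 : 0 ≤ ω) (hω1 : ω ≤ 1)
    (A : (Fin n → EuclideanSpace ℝ (Fin d)) →ₗ[ℝ] EuclideanSpace ℝ (Fin m))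
    (huniq : ∀ (x : Fin n → EuclideanSpace ℝ (Fin d)) (T0 : Finset (Fin n)),
      T0.card ≤ k → (∀ i ∉ T0, x i = 0) →
      ∀ Tt : Finset (Fin n), ((T0 ∩ Ttᶜ) ∪ (T0ᶜ ∩ Tt)).card ≤ s →
      ∀ z : Fin n → EuclideanSpace ℝ (Fin d), A z = A x → z ≠ x →
        ω * ∑ i ∈ Tt, ‖x i‖ ^ p + ∑ i ∈ Ttᶜ, ‖x i‖ ^ p <
          ω * ∑ i ∈ Tt, ‖z i‖ ^ p + ∑ i ∈ Ttᶜ, ‖z i‖ ^ p)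
    (h : Fin n → EuclideanSpace ℝ (Fin d)) (hh : A h = 0) (hne : h ≠ 0)
    (T S : Finset (Fin n)) (hT : T.card ≤ k) (hS : S.card ≤ s) :
    ω * ∑ i ∈ T, ‖h i‖ ^ p + (1 - ω) * ∑ i ∈ S, ‖h i‖ ^ p < ∑ i ∈ Tᶜ, ‖h i‖ ^ p := by
  classical
  set a : Fin n → ℝ := fun i => ‖h i‖ ^ p with ha
  set x : Fin n → EuclideanSpace ℝ (Fin d) := fun i => if i ∈ T then h i else 0 with hx
  set z : Fin n → EuclideanSpace ℝ (Fin d) := fun i => if i ∈ T then 0 else -h i with hz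
  have hxz : x - z = h := by
    funext i
    by_cases hi : i ∈ T <;> simp [hx, hz, hi]
  have hAz : A z = A x := by
    have h1 : A x - A z = 0 := by rw [← map_sub, hxz, hh]
    have := sub_eq_zero.mp h1
    exact this.symm
  have hzx : z ≠ x := by
    intro he
    apply hne
    rw [← hxz, he, sub_self]
  set Tt : Finset (Fin n) := (T \ S) ∪ (S \ T) with hTt
  have hsetS : (T ∩ Ttᶜ) ∪ (Tᶜ ∩ Tt) = S := by
    ext i
    simp only [hTt, Finset.mem_union, Finset.mem_inter, Finset.mem_compl,
      Finset.mem_sdiff]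
    tauto
  have hcard : ((T ∩ Ttᶜ) ∪ (Tᶜ ∩ Tt)).card ≤ s := by rw [hsetS]; exact hS
  have hsupp : ∀ i ∉ T, x i = 0 := by intro i hi; simp [hx, hi]
  have key := huniq x T hT hsupp Tt hcard z hAz hzx
  have hxsum : ∀ U : Finset (Fin n), ∑ i ∈ U, ‖x i‖ ^ p = ∑ i ∈ U ∩ T, a i := by
    intro U
    rw [← Finset.sum_inter_add_sum_sdiff U T (fun i => ‖x i‖ ^ p)]
    have h2 : ∑ i ∈ U \ T, ‖x i‖ ^ p = 0 := by
      apply Finset.sum_eq_zero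
      intro i hi
      rw [Finset.mem_sdiff] at hi
      simp [hx, hi.2, Real.zero_rpow hp.ne']
    rw [h2, add_zero]
    apply Finset.sum_congr rfl
    intro i hi
    rw [Finset.mem_inter] at hi
    simp [hx, hi.2, ha]
  have hzsum : ∀ U : Finset (Fin n), ∑ i ∈ U, ‖z i‖ ^ p = ∑ i ∈ U \ T, a i := by
    intro U
    rw [← Finset.sum_inter_add_sum_sdiff U T (fun i => ‖z i‖ ^ p)]
    have h2 : ∑ i ∈ U ∩ T, ‖z i‖ ^ p = 0 := by
      apply Finset.sum_eq_zero
      intro i hi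
      rw [Finset.mem_inter] at hi
      simp [hz, hi.2, Real.zero_rpow hp.ne']
    rw [h2, zero_add]
    apply Finset.sum_congr rfl
    intro i hi
    rw [Finset.mem_sdiff] at hi
    simp [hz, hi.2, ha]
  rw [hxsum, hxsum, hzsum, hzsum] at key
  have e1 : Tt ∩ T = T \ S := by
    ext i
    simp only [hTt, Finset.mem_union, Finset.mem_inter, Finset.mem_sdiff]
    tauto
  have e2 : Ttᶜ ∩ T = T ∩ S := by
    ext i
    simp only [hTt, Finset.mem_union, Finset.mem_inter, Finset.mem_compl,
      Finset.mem_sdiff]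
    tauto
  have e3 : Tt \ T = S \ T := by
    ext i
    simp only [hTt, Finset.mem_union, Finset.mem_sdiff]
    tauto
  have e4 : Ttᶜ \ T = Tᶜ \ S := by
    ext i
    simp only [hTt, Finset.mem_union, Finset.mem_compl, Finset.mem_sdiff]
    tauto
  rw [e1, e2, e3, e4] at key
  have dT : ∑ i ∈ T, a i = ∑ i ∈ T ∩ S, a i + ∑ i ∈ T \ S, a i :=
    (Finset.sum_inter_add_sum_sdiff T S a).symm
  have dS : ∑ i ∈ S, a i = ∑ i ∈ S ∩ T, a i + ∑ i ∈ S \ T, a i :=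
    (Finset.sum_inter_add_sum_sdiff S T a).symm
  have dST : S ∩ T = T ∩ S := Finset.inter_comm S T
  rw [dST] at dS
  have dTc : ∑ i ∈ Tᶜ, a i = ∑ i ∈ Tᶜ ∩ S, a i + ∑ i ∈ Tᶜ \ S, a i :=
    (Finset.sum_inter_add_sum_sdiff Tᶜ S a).symm
  have e5 : Tᶜ ∩ S = S \ T := by
    ext i
    simp only [Finset.mem_inter, Finset.mem_compl, Finset.mem_sdiff]
    tauto
  rw [e5] at dTc
  rw [dT, dS, dTc]
  nlinarith [key]
end

section
/- (Block p-RIP implies weighted block p-NSP) Let 0 < p ≤ 1, ω ∈ [0,1], k, s positive integers, a > 1 an integer with ak ≥ s − k when s > k. Suppose A ∈ ℝ^{m×N} (block structure with blocks of size d) has block p-restricted isometry constants satisfying δ_{ak} + (a^{1−p/2}/γ) δ_{(a+1)k} < a^{1−p/2}/γ − 1, where γ = ω + (1−ω)(s/k)^{1−p/2}. Then A satisfies the weighted block p-null space property with parameters k, s and constant C = a^{p/2−1} γ (1+δ_{ak}) / (1−δ_{(a+1)k}) < 1; that is, for all h with Ah = 0 and all block sets T, S with |T| ≤ k, |S| ≤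 s: ω‖h_T‖_{2,p}^p + (1−ω)‖h_S‖_{2,p}^p ≤ C‖h_{T^c}‖_{2,p}^p. -/
/-!
Sort the blocks of a null vector `h` by decreasing norm, let `T₀` be the `k` largest ones and cut
the remaining blocks, in order, into groups `T₁, T₂, …` of `a k` blocks. Since `A h = 0`, the
`p`-triangle inequality and the two restricted isometry bounds give
`(1 - δ_{(a+1)k}) ‖h_{T₀ ∪ T₁}‖₂^p ≤ (1 + δ_{ak}) ∑_{j ≥ 2} ‖h_{T_j}‖₂^p`. Every block of `T_j` is
no larger than the `p`-mean of the blocks of `T_{j-1}`, so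
`‖h_{T_j}‖₂^p ≤ (a k)^{p/2-1} ‖h_{T_{j-1}}‖_{2,p}^p`, and the sum telescopes into
`(a k)^{p/2-1} ‖h_{T₀ᶜ}‖_{2,p}^p`. On the other side, Hölder's inequality bounds
`‖h_T‖_{2,p}^p` by `k^{1-p/2} ‖h_{T₀ ∪ T₁}‖₂^p` and `‖h_S‖_{2,p}^p` by `s^{1-p/2}` times the same
quantity (this is where `s ≤ k + a k` enters), and the weights `ω`, `1 - ω` combine into
`γ k^{1-p/2}`. Finally `T₀` carries at least as much `p`-mass as any `T` with `|T| ≤ k`, so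
`‖h_{T₀ᶜ}‖_{2,p} ≤ ‖h_{Tᶜ}‖_{2,p}`.
-/

open Finset

section PQuasinorm

variable {ι κ : Type*} [Fintype κ] {p : ℝ}

theorem sum_abs_rpow_add_le (hp : 0 ≤ p) (hp1 : p ≤ 1) (x y : κ → ℝ) :
    ∑ i, |x i + y i| ^ p ≤ ∑ i, |x i| ^ p + ∑ i, |y i| ^ p := by
  rw [← sum_add_distrib]
  gcongr with i
  calc |x i + y i| ^ p ≤ (|x i| + |y i|) ^ p := by gcongr; exact abs_add_le _ _
    _ ≤ |x i| ^ p + |y i| ^ p := Real.rpow_add_le_add_rpow (abs_nonneg _) (abs_nonneg _) hp hp1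

theorem sum_abs_rpow_sum_le (hp : 0 < p) (hp1 : p ≤ 1) (s : Finset ι) (y : ι → κ → ℝ) :
    ∑ i, |(∑ j ∈ s, y j) i| ^ p ≤ ∑ j ∈ s, ∑ i, |y j i| ^ p :=
  le_sum_of_subadditive (fun x : κ → ℝ => ∑ i, |x i| ^ p) (by simp [Real.zero_rpow hp.ne'])
    (sum_abs_rpow_add_le hp.le hp1) s y

theorem sum_abs_rpow_le_of_map_add_sum_eq_zero {V : Type*} [AddCommGroup V] [Module ℝ V] {m : ℕ}
    (A : V →ₗ[ℝ] EuclideanSpace ℝ (Fin m)) (hp : 0 < p) (hp1 : p ≤ 1) {y : V} {s : Finset ι}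
    {z : ι → V} (h : A (y + ∑ j ∈ s, z j) = 0) :
    ∑ i, |A y i| ^ p ≤ ∑ j ∈ s, ∑ i, |A (z j) i| ^ p := by
  rw [map_add, map_sum, add_eq_zero_iff_eq_neg] at h
  have hy : ∀ i, |A y i| = |(∑ j ∈ s, (A (z j)).ofLp) i| := fun i => by
    rw [h, WithLp.ofLp_neg, WithLp.ofLp_sum, Pi.neg_apply, abs_neg]
  simp only [hy]
  exact sum_abs_rpow_sum_le hp hp1 s _

end PQuasinorm

section PowerMean

variable {ι : Type*} {p : ℝ}

theorem sum_rpow_le_card_rpow_mul_sqrt_sum_sq (hp : 0 < p) (hp2 : p ≤ 2) (s : Finset ι)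
    {a : ι → ℝ} (ha : ∀ i, 0 ≤ a i) :
    ∑ i ∈ s, a i ^ p ≤ (#s : ℝ) ^ (1 - p / 2) * √(∑ i ∈ s, a i ^ 2) ^ p := by
  have key := Real.inner_le_weight_mul_Lp_of_nonneg s (p := 2 / p)
    (by rw [le_div_iff₀ hp]; linarith) (fun _ => 1) (fun i => a i ^ p) (fun _ => zero_le_one)
    (fun i => Real.rpow_nonneg (ha i) p)
  have hsq : ∀ i, (a i ^ p) ^ (2 / p) = a i ^ 2 := fun i => by
    rw [← Real.rpow_mul (ha i), mul_div_cancel₀ _ hp.ne', Real.rpow_two]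
  rw [Real.sqrt_eq_rpow, ← Real.rpow_mul (sum_nonneg fun i _ => sq_nonneg (a i)),
    one_div_mul_eq_div]
  simpa [hsq] using key

theorem sqrt_sum_sq_rpow_le_of_forall_le_s10 (hp : 0 < p) {D W : Finset ι} {a : ι → ℝ}
    (ha : ∀ i, 0 ≤ a i) {N : ℕ} (hD : #D ≤ N) (hW : N ≤ #W)
    (hle : ∀ i ∈ D, ∀ j ∈ W, a i ≤ a j) :
    √(∑ i ∈ D, a i ^ 2) ^ p ≤ (N : ℝ) ^ (p / 2 - 1) * ∑ j ∈ W, a j ^ p := by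
  obtain rfl | hDne := D.eq_empty_or_nonempty
  · simp only [sum_empty, Real.sqrt_zero, Real.zero_rpow hp.ne']
    exact mul_nonneg (by positivity) (sum_nonneg fun j _ => Real.rpow_nonneg (ha j) p)
  obtain ⟨i₀, hi₀, hmax⟩ := exists_max_image D a hDne
  have hN : (0 : ℝ) < N := by exact_mod_cast hDne.card_pos.trans_le hD
  have hsq : ∑ i ∈ D, a i ^ 2 ≤ N * a i₀ ^ 2 := calc
    ∑ i ∈ D, a i ^ 2 ≤ #D • a i₀ ^ 2 :=
      sum_le_card_nsmul _ _ _ fun i hi => pow_le_pow_left₀ (ha i) (hmax i hi) 2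
    _ ≤ N * a i₀ ^ 2 := by rw [nsmul_eq_mul]; gcongr
  have hW' : N * a i₀ ^ p ≤ ∑ j ∈ W, a j ^ p := calc
    N * a i₀ ^ p ≤ #W • a i₀ ^ p := by
      rw [nsmul_eq_mul]; gcongr
      exact Real.rpow_nonneg (ha i₀) p
    _ ≤ ∑ j ∈ W, a j ^ p :=
      card_nsmul_le_sum _ _ _ fun j hj => Real.rpow_le_rpow (ha i₀) (hle i₀ hi₀ j hj) hp.le
  calc √(∑ i ∈ D, a i ^ 2) ^ p ≤ (√N * a i₀) ^ p := by
        gcongr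
        rw [← Real.sqrt_sq (ha i₀), ← Real.sqrt_mul hN.le]
        exact Real.sqrt_le_sqrt hsq
    _ = (N : ℝ) ^ (p / 2 - 1) * (N * a i₀ ^ p) := by
        rw [Real.mul_rpow (Real.sqrt_nonneg _) (ha i₀), Real.sqrt_eq_rpow, ← Real.rpow_mul hN.le,
          Real.rpow_sub hN, Real.rpow_one]
        field_simp
    _ ≤ (N : ℝ) ^ (p / 2 - 1) * ∑ j ∈ W, a j ^ p := by gcongr

end PowerMean

section Telescoping

variable {ι : Type*} [DecidableEq ι] {G : ℕ → Finset ι}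

theorem indicator_add_sum_indicator_sdiff {E : Type*} [AddCommGroup E] (hG : Monotone G)
    (x : ι → E) (L : ℕ) :
    (G 0 : Set ι).indicator x + ∑ j ∈ range L, (↑(G (j + 1) \ G j) : Set ι).indicator x =
      (G L : Set ι).indicator x := by
  have hstep : ∀ j, (↑(G (j + 1) \ G j) : Set ι).indicator x =
      (G (j + 1) : Set ι).indicator x - (G j : Set ι).indicator x := fun j => by
    rw [coe_sdiff, Set.indicator_sdiff (coe_subset.2 (hG j.le_succ))]
  simp only [hstep]
  rw [sum_range_sub (fun j => (G j : Set ι).indicator x), add_sub_cancel]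

theorem sum_range_sum_sdiff {M : Type*} [AddCommGroup M] (hG : Monotone G) (f : ι → M) (L : ℕ) :
    ∑ j ∈ range L, ∑ i ∈ G (j + 1) \ G j, f i = ∑ i ∈ G L \ G 0, f i := by
  simp only [sum_sdiff_eq_sub (hG (Nat.le_add_right _ 1))]
  rw [sum_range_sub (fun j => ∑ i ∈ G j, f i), sum_sdiff_eq_sub (hG (Nat.zero_le L))]

end Telescoping

theorem Finset.sum_le_sum_of_forall_le_of_card_le {ι M : Type*} [AddCommMonoid M] [LinearOrder M]
    [IsOrderedAddMonoid M] {s t : Finset ι} {f : ι → M} (hst : #s ≤ #t)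
    (ht : ∀ j ∈ t, 0 ≤ f j) (hle : ∀ i ∈ s, ∀ j ∈ t, f i ≤ f j) :
    ∑ i ∈ s, f i ≤ ∑ j ∈ t, f j := by
  obtain rfl | htne := t.eq_empty_or_nonempty
  · simp [card_eq_zero.mp (Nat.le_zero.mp hst)]
  obtain ⟨j₀, hj₀, hmin⟩ := exists_min_image t f htne
  calc ∑ i ∈ s, f i ≤ #s • f j₀ := sum_le_card_nsmul _ _ _ fun i hi => hle i hi j₀ hj₀
    _ ≤ #t • f j₀ := nsmul_le_nsmul_left (ht j₀ hj₀) hst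
    _ ≤ ∑ j ∈ t, f j := card_nsmul_le_sum _ _ _ hmin

theorem exists_perm_antitone_comp_symm {n : ℕ} {α : Type*} [LinearOrder α] (f : Fin n → α) :
    ∃ r : Equiv.Perm (Fin n), Antitone (f ∘ r.symm) :=
  ⟨(Tuple.sort (OrderDual.toDual ∘ f)).symm,
    monotone_toDual_comp_iff.mp (Tuple.monotone_sort (OrderDual.toDual ∘ f))⟩

section Rank

variable {n : ℕ} (r : Equiv.Perm (Fin n)) {p : ℝ}

/-- When `f ∘ r.symm` is antitone (rank `0` carries the largest value), these are `t` indices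
with the largest values of `f`, or all of them if `n ≤ t`. -/
def rankLT (t : ℕ) : Finset (Fin n) := {i | (r i : ℕ) < t}

variable {r}

@[simp]
theorem mem_rankLT {t : ℕ} {i : Fin n} : i ∈ rankLT r t ↔ (r i : ℕ) < t := by
  simp [rankLT]

theorem rankLT_mono : Monotone (rankLT r) := fun _ _ h _ => by
  simp only [mem_rankLT]; omega

theorem rankLT_eq_univ {t : ℕ} (h : n ≤ t) : rankLT r t = univ :=
  eq_univ_of_forall fun i => mem_rankLT.2 ((r i).isLt.trans_le h)

theorem card_rankLT (t : ℕ) : #(rankLT r t) = min t n := by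
  rw [← card_range (min t n)]
  refine card_bij (fun i _ => (r i : ℕ)) (fun i hi => ?_)
    (fun i _ j _ h => r.injective (Fin.ext h)) fun x hx => ?_
  · simp_all
  · simp only [mem_range, lt_min_iff] at hx
    exact ⟨r.symm ⟨x, hx.2⟩, by simpa using hx.1, by simp⟩

theorem card_rankLT_sdiff {t t' : ℕ} (h : t ≤ t') :
    #(rankLT r t' \ rankLT r t) = min t' n - min t n := by
  rw [card_sdiff_of_subset (rankLT_mono h), card_rankLT, card_rankLT]

variable {α : Type*} [LinearOrder α] {f : Fin n → α}

theorem le_of_mem_rankLT_of_notMem (hf : Antitone (f ∘ r.symm)) {t : ℕ} {i j : Fin n}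
    (hi : i ∈ rankLT r t) (hj : j ∉ rankLT r t) : f j ≤ f i := by
  simpa using hf (show r i ≤ r j from Fin.le_def.2 (by simp_all; omega))

theorem sum_le_sum_rankLT [AddCommMonoid α] [IsOrderedAddMonoid α] (hf : Antitone (f ∘ r.symm))
    (hf0 : ∀ i, 0 ≤ f i) {W : Finset (Fin n)} {t : ℕ} (hW : #W ≤ t) :
    ∑ i ∈ W, f i ≤ ∑ i ∈ rankLT r t, f i := by
  rw [← sum_inter_add_sum_sdiff W (rankLT r t), ← sum_inter_add_sum_sdiff (rankLT r t) W,
    inter_comm]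
  refine add_le_add_right (sum_le_sum_of_forall_le_of_card_le ?_ (fun j _ => hf0 j)
    fun i hi j hj => ?_) _
  · rw [card_sdiff_le_card_sdiff_iff, card_rankLT]
    exact le_min hW ((card_le_univ W).trans_eq (Fintype.card_fin n))
  · exact le_of_mem_rankLT_of_notMem hf (mem_sdiff.1 hj).1 (mem_sdiff.1 hi).2

theorem sum_compl_rankLT_le [AddCommGroup α] [IsOrderedAddMonoid α] (hf : Antitone (f ∘ r.symm))
    (hf0 : ∀ i, 0 ≤ f i) {W : Finset (Fin n)} {t : ℕ} (hW : #W ≤ t) :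
    ∑ i ∈ (rankLT r t)ᶜ, f i ≤ ∑ i ∈ Wᶜ, f i := by
  rw [← add_le_add_iff_right (∑ i ∈ W, f i), sum_compl_add_sum,
    ← sum_compl_add_sum (rankLT r t)]
  exact add_le_add_right (sum_le_sum_rankLT hf hf0 hW) _

variable {f : Fin n → ℝ}

theorem sqrt_sum_sq_rpow_sdiff_rankLT_le (hf : Antitone (f ∘ r.symm)) (hf0 : ∀ i, 0 ≤ f i)
    (hp : 0 < p) {t₀ t₁ t₂ N : ℕ} (h₀ : t₀ + N ≤ t₁) (h₁ : t₁ ≤ t₂) (h₂ : t₂ ≤ t₁ + N) :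
    √(∑ i ∈ rankLT r t₂ \ rankLT r t₁, f i ^ 2) ^ p ≤
      (N : ℝ) ^ (p / 2 - 1) * ∑ i ∈ rankLT r t₁ \ rankLT r t₀, f i ^ p := by
  by_cases ht₁ : n ≤ t₁
  · simp only [rankLT_eq_univ ht₁, sdiff_eq_empty_iff_subset.2 (subset_univ _), sum_empty,
      Real.sqrt_zero, Real.zero_rpow hp.ne']
    exact mul_nonneg (by positivity) (sum_nonneg fun j _ => Real.rpow_nonneg (hf0 j) p)
  refine sqrt_sum_sq_rpow_le_of_forall_le_s10 hp hf0 ?_ ?_ fun i hi j hj => ?_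
  · rw [card_rankLT_sdiff h₁]; omega
  · rw [card_rankLT_sdiff (by omega)]; omega
  · exact le_of_mem_rankLT_of_notMem hf (mem_sdiff.1 hj).1 (mem_sdiff.1 hi).2

theorem sum_rpow_le_of_card_le (hf : Antitone (f ∘ r.symm)) (hf0 : ∀ i, 0 ≤ f i) (hp : 0 < p)
    (hp2 : p ≤ 2) {W : Finset (Fin n)} {w t : ℕ} (hW : #W ≤ w) (hwt : w ≤ t) :
    ∑ i ∈ W, f i ^ p ≤ (w : ℝ) ^ (1 - p / 2) * √(∑ i ∈ rankLT r t, f i ^ 2) ^ p := calc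
  ∑ i ∈ W, f i ^ p ≤ ∑ i ∈ rankLT r w, f i ^ p :=
    sum_le_sum_rankLT (fun _ _ hij => Real.rpow_le_rpow (hf0 _) (hf hij) hp.le)
      (fun i => Real.rpow_nonneg (hf0 i) p) hW
  _ ≤ (#(rankLT r w) : ℝ) ^ (1 - p / 2) * √(∑ i ∈ rankLT r w, f i ^ 2) ^ p :=
    sum_rpow_le_card_rpow_mul_sqrt_sum_sq hp hp2 _ hf0
  _ ≤ (w : ℝ) ^ (1 - p / 2) * √(∑ i ∈ rankLT r t, f i ^ 2) ^ p := by
    gcongr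
    · linarith
    · rw [card_rankLT]; exact min_le_left w n
    · exact rankLT_mono hwt

theorem weighted_sum_rpow_le (hf : Antitone (f ∘ r.symm)) (hf0 : ∀ i, 0 ≤ f i) (hp : 0 < p)
    (hp2 : p ≤ 2) {ω : ℝ} (hω0 : 0 ≤ ω) (hω1 : ω ≤ 1) {T S : Finset (Fin n)} {k s t : ℕ}
    (hk : 0 < k) (hT : #T ≤ k) (hS : #S ≤ s) (hkt : k ≤ t) (hst : s ≤ t) :
    ω * ∑ i ∈ T, f i ^ p + (1 - ω) * ∑ i ∈ S, f i ^ p ≤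
      (ω + (1 - ω) * ((s : ℝ) / k) ^ (1 - p / 2)) * (k : ℝ) ^ (1 - p / 2) *
        √(∑ i ∈ rankLT r t, f i ^ 2) ^ p := by
  have hkpos : (0 : ℝ) < k := by positivity
  calc ω * ∑ i ∈ T, f i ^ p + (1 - ω) * ∑ i ∈ S, f i ^ p
      ≤ ω * ((k : ℝ) ^ (1 - p / 2) * √(∑ i ∈ rankLT r t, f i ^ 2) ^ p) +
          (1 - ω) * ((s : ℝ) ^ (1 - p / 2) * √(∑ i ∈ rankLT r t, f i ^ 2) ^ p) := by
        gcongr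
        · exact sum_rpow_le_of_card_le hf hf0 hp hp2 hT hkt
        · exact sum_rpow_le_of_card_le hf hf0 hp hp2 hS hst
    _ = _ := by
        rw [Real.div_rpow (by positivity) hkpos.le]
        field_simp

end Rank

section BlockSparse

variable {ι E : Type*}

def IsBlockSparse [Zero E] (t : ℕ) (v : ι → E) : Prop :=
  ∃ T : Finset ι, #T ≤ t ∧ ∀ i ∉ T, v i = 0

theorem isBlockSparse_indicator [Zero E] {s : Finset ι} {t : ℕ} (hs : #s ≤ t) (x : ι → E) :
    IsBlockSparse t ((s : Set ι).indicator x) :=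
  ⟨s, hs, fun _ hi => Set.indicator_of_notMem (mod_cast hi) x⟩

theorem sum_norm_indicator_sq [Fintype ι] [SeminormedAddCommGroup E] (s : Finset ι)
    (x : ι → E) : ∑ i, ‖(s : Set ι).indicator x i‖ ^ 2 = ∑ i ∈ s, ‖x i‖ ^ 2 := by
  classical
  simp_rw [norm_indicator_eq_indicator_norm, Set.indicator_apply, ite_pow, mem_coe]
  simp [sum_ite_mem]

end BlockSparse

theorem rpow_head_le_tail_of_map_eq_zero {n m : ℕ} {E : Type*} [NormedAddCommGroup E]
    [Module ℝ E] (A : (Fin n → E) →ₗ[ℝ] EuclideanSpace ℝ (Fin m)) {p δ₁ δ₂ : ℝ} (hp : 0 < p)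
    (hp1 : p ≤ 1) (hδ₁ : 0 ≤ 1 + δ₁) {k N K : ℕ} (hN : 0 < N) (hK : k + N ≤ K)
    (hup : ∀ v, IsBlockSparse N v → ∑ i, |A v i| ^ p ≤ (1 + δ₁) * √(∑ i, ‖v i‖ ^ 2) ^ p)
    (hlow : ∀ v, IsBlockSparse K v → (1 - δ₂) * √(∑ i, ‖v i‖ ^ 2) ^ p ≤ ∑ i, |A v i| ^ p)
    {h : Fin n → E} (hh : A h = 0) {r : Equiv.Perm (Fin n)}
    (hr : Antitone ((‖h ·‖) ∘ r.symm)) :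
    (1 - δ₂) * √(∑ i ∈ rankLT r (k + N), ‖h i‖ ^ 2) ^ p ≤
      (1 + δ₁) * ((N : ℝ) ^ (p / 2 - 1) * ∑ i ∈ (rankLT r k)ᶜ, ‖h i‖ ^ p) := by
  -- `G j` is `T₀ ∪ ⋯ ∪ T_j` in the notation of the header.
  set G : ℕ → Finset (Fin n) := fun j => rankLT r (k + j * N)
  have hG : Monotone G := fun i j hij => rankLT_mono (by gcongr)
  have hdecomp : A ((G 1 : Set (Fin n)).indicator h +
      ∑ j ∈ range n, (↑(G (j + 1 + 1) \ G (j + 1)) : Set (Fin n)).indicator h) = 0 := by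
    rw [indicator_add_sum_indicator_sdiff (G := fun j => G (j + 1))
      (fun i j hij => hG (by omega)) h n, show G (n + 1) = univ from rankLT_eq_univ (by nlinarith),
      coe_univ, Set.indicator_univ, hh]
  rw [show rankLT r (k + N) = G 1 by simp [G], show rankLT r k = G 0 by simp [G]]
  calc (1 - δ₂) * √(∑ i ∈ G 1, ‖h i‖ ^ 2) ^ p
      ≤ ∑ i, |A ((G 1 : Set (Fin n)).indicator h) i| ^ p := by
        simpa only [sum_norm_indicator_sq] using
          hlow _ (isBlockSparse_indicator (by simp only [G, card_rankLT]; omega) h)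
    _ ≤ ∑ j ∈ range n,
          ∑ i, |A ((↑(G (j + 1 + 1) \ G (j + 1)) : Set (Fin n)).indicator h) i| ^ p :=
        sum_abs_rpow_le_of_map_add_sum_eq_zero A hp hp1 hdecomp
    _ ≤ ∑ j ∈ range n, (1 + δ₁) * √(∑ i ∈ G (j + 1 + 1) \ G (j + 1), ‖h i‖ ^ 2) ^ p := by
        gcongr with j
        have hcard : #(G (j + 1 + 1) \ G (j + 1)) ≤ N := by
          rw [card_rankLT_sdiff (by simp only [add_one_mul]; omega)]
          simp only [add_one_mul]; omega
        simpa only [sum_norm_indicator_sq] using hup _ (isBlockSparse_indicator hcard h)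
    _ ≤ ∑ j ∈ range n,
          (1 + δ₁) * ((N : ℝ) ^ (p / 2 - 1) * ∑ i ∈ G (j + 1) \ G j, ‖h i‖ ^ p) := by
        gcongr with j
        exact sqrt_sum_sq_rpow_sdiff_rankLT_le hr (fun i => norm_nonneg _) hp
          (by simp only [add_one_mul]; omega) (by simp only [add_one_mul]; omega)
          (by simp only [add_one_mul]; omega)
    _ = (1 + δ₁) * ((N : ℝ) ^ (p / 2 - 1) * ∑ i ∈ G n \ G 0, ‖h i‖ ^ p) := by
        rw [← mul_sum, ← mul_sum, sum_range_sum_sdiff hG]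
    _ ≤ (1 + δ₁) * ((N : ℝ) ^ (p / 2 - 1) * ∑ i ∈ (G 0)ᶜ, ‖h i‖ ^ p) := by
        gcongr
        exact fun i hi => mem_compl.2 (mem_sdiff.1 hi).2

theorem natCast_rpow_one_sub_mul_rpow_sub_one {a k : ℕ} (hk : 0 < k) (q : ℝ) :
    (k : ℝ) ^ (1 - q) * ((a * k : ℕ) : ℝ) ^ (q - 1) = (a : ℝ) ^ (q - 1) := by
  have hkpos : (0 : ℝ) < k := by positivity
  rw [Nat.cast_mul, Real.mul_rpow (Nat.cast_nonneg a) hkpos.le, mul_left_comm,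
    ← Real.rpow_add hkpos]
  norm_num

theorem inv_mul_mul_div_lt_one {t γ δ₁ δ₂ : ℝ} (ht : 0 < t) (hγ : 0 < γ) (hδ₁ : 0 ≤ δ₁)
    (h : δ₁ + t / γ * δ₂ < t / γ - 1) : 0 < 1 - δ₂ ∧ t⁻¹ * γ * (1 + δ₁) / (1 - δ₂) < 1 := by
  have key : γ * (1 + δ₁) < t * (1 - δ₂) := by
    have := mul_lt_mul_of_pos_left h hγ
    field_simp at this
    linarith
  have hδ₂ : 0 < 1 - δ₂ :=
    pos_of_mul_pos_right ((by positivity : 0 < γ * (1 + δ₁)).trans key) ht.le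
  refine ⟨hδ₂, ?_⟩
  rw [div_lt_one hδ₂, mul_assoc, inv_mul_lt_iff₀ ht]
  exact key

theorem block_pRIP_implies_weighted_block_pNSP_general (n d m k s a : ℕ) (p ω δak δa1k γ : ℝ)
    (hp : 0 < p) (hp1 : p ≤ 1) (hω0 : 0 ≤ ω) (hω1 : ω ≤ 1)
    (hk : 0 < k) (hs : 0 < s) (ha : 1 < a)
    (has : k < s → s - k ≤ a * k)
    (hγ : γ = ω + (1 - ω) * ((s : ℝ) / (k : ℝ)) ^ (1 - p / 2))
    (hδak : 0 ≤ δak)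
    (A : (Fin n → EuclideanSpace ℝ (Fin d)) →ₗ[ℝ] EuclideanSpace ℝ (Fin m))
    (hRIPu : ∀ v : Fin n → EuclideanSpace ℝ (Fin d),
      (∃ T : Finset (Fin n), T.card ≤ a * k ∧ ∀ i ∉ T, v i = 0) →
      ∑ i, |A v i| ^ p ≤ (1 + δak) * Real.sqrt (∑ i, ‖v i‖ ^ 2) ^ p)
    (hRIPl : ∀ v : Fin n → EuclideanSpace ℝ (Fin d),
      (∃ T : Finset (Fin n), T.card ≤ (a + 1) * k ∧ ∀ i ∉ T, v i = 0) →
      (1 - δa1k) * Real.sqrt (∑ i, ‖v i‖ ^ 2) ^ p ≤ ∑ i, |A v i| ^ p)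
    (hcond : δak + (a : ℝ) ^ (1 - p / 2) / γ * δa1k < (a : ℝ) ^ (1 - p / 2) / γ - 1) :
    (a : ℝ) ^ (p / 2 - 1) * γ * (1 + δak) / (1 - δa1k) < 1 ∧
    ∀ h : Fin n → EuclideanSpace ℝ (Fin d), A h = 0 →
      ∀ T S : Finset (Fin n), T.card ≤ k → S.card ≤ s →
        ω * ∑ i ∈ T, ‖h i‖ ^ p + (1 - ω) * ∑ i ∈ S, ‖h i‖ ^ p ≤
          ((a : ℝ) ^ (p / 2 - 1) * γ * (1 + δak) / (1 - δa1k)) * ∑ i ∈ Tᶜ, ‖h i‖ ^ p := by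
  have hapos : (0 : ℝ) < a := by positivity
  have hγpos : 0 < γ := hγ ▸ by
    simpa using convex_Ioi (0 : ℝ) (Set.mem_Ioi.2 one_pos) (Set.mem_Ioi.2 (by positivity))
      hω0 (sub_nonneg.2 hω1) (add_sub_cancel ω 1)
  have hinv : (a : ℝ) ^ (p / 2 - 1) = ((a : ℝ) ^ (1 - p / 2))⁻¹ := by
    rw [← Real.rpow_neg hapos.le, neg_sub]
  obtain ⟨hδ, hC⟩ := inv_mul_mul_div_lt_one (by positivity) hγpos hδak hcond
  refine ⟨hinv ▸ hC, fun h hh T S hT hS => ?_⟩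
  obtain ⟨r, hr⟩ := exists_perm_antitone_comp_symm (‖h ·‖)
  have hhead := rpow_head_le_tail_of_map_eq_zero A hp hp1 (by linarith) (by positivity)
    (by rw [add_one_mul, add_comm]) hRIPu hRIPl hh hr
  have htail := sum_compl_rankLT_le (fun _ _ hij => Real.rpow_le_rpow (norm_nonneg _) (hr hij)
    hp.le) (fun i => Real.rpow_nonneg (norm_nonneg (h i)) p) hT
  refine (hγ ▸ weighted_sum_rpow_le hr (fun i => norm_nonneg (h i)) hp (by linarith) hω0 hω1 hk
    hT hS (Nat.le_add_right k (a * k)) (by omega)).trans ?_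
  rw [← natCast_rpow_one_sub_mul_rpow_sub_one hk, div_mul_eq_mul_div, le_div_iff₀ hδ]
  calc _ = γ * (k : ℝ) ^ (1 - p / 2) *
        ((1 - δa1k) * √(∑ i ∈ rankLT r (k + a * k), ‖h i‖ ^ 2) ^ p) := by ring
    _ ≤ γ * (k : ℝ) ^ (1 - p / 2) *
        ((1 + δak) * (((a * k : ℕ) : ℝ) ^ (p / 2 - 1) * ∑ i ∈ Tᶜ, ‖h i‖ ^ p)) := by
      gcongr _ * ?_
      exact hhead.trans (by gcongr)
    _ = _ := by ring

/-- Block p-RIP implies weighted block p-NSP: under the block p-RIP condition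
`δ_{ak} + (a^(1-p/2)/γ) δ_{(a+1)k} < a^(1-p/2)/γ - 1` with
`γ = ω + (1-ω)(s/k)^(1-p/2)`, the matrix `A` satisfies the weighted block p-NSP with
parameters `k, s` and constant `C = a^(p/2-1) γ (1+δ_{ak})/(1-δ_{(a+1)k}) < 1`. -/
theorem block_pRIP_implies_weighted_block_pNSP (n d m k s a : ℕ) (p ω δak δa1k γ : ℝ)
    (hp : 0 < p) (hp1 : p ≤ 1) (hω0 : 0 ≤ ω) (hω1 : ω ≤ 1)
    (hk : 0 < k) (hs : 0 < s) (ha : 1 < a)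
    (has : k < s → s - k ≤ a * k)
    (hγ : γ = ω + (1 - ω) * ((s : ℝ) / (k : ℝ)) ^ (1 - p / 2))
    (hδak : 0 ≤ δak) (hδa1k : 0 ≤ δa1k)
    (A : (Fin n → EuclideanSpace ℝ (Fin d)) →ₗ[ℝ] EuclideanSpace ℝ (Fin m))
    (hRIPu : ∀ v : Fin n → EuclideanSpace ℝ (Fin d),
      (∃ T : Finset (Fin n), T.card ≤ a * k ∧ ∀ i ∉ T, v i = 0) →
      ∑ i, |A v i| ^ p ≤ (1 + δak) * Real.sqrt (∑ i, ‖v i‖ ^ 2) ^ p)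
    (hRIPl : ∀ v : Fin n → EuclideanSpace ℝ (Fin d),
      (∃ T : Finset (Fin n), T.card ≤ (a + 1) * k ∧ ∀ i ∉ T, v i = 0) →
      (1 - δa1k) * Real.sqrt (∑ i, ‖v i‖ ^ 2) ^ p ≤ ∑ i, |A v i| ^ p)
    (hcond : δak + (a : ℝ) ^ (1 - p / 2) / γ * δa1k < (a : ℝ) ^ (1 - p / 2) / γ - 1) :
    (a : ℝ) ^ (p / 2 - 1) * γ * (1 + δak) / (1 - δa1k) < 1 ∧
    ∀ h : Fin n → EuclideanSpace ℝ (Fin d), A h = 0 →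
      ∀ T S : Finset (Fin n), T.card ≤ k → S.card ≤ s →
        ω * ∑ i ∈ T, ‖h i‖ ^ p + (1 - ω) * ∑ i ∈ S, ‖h i‖ ^ p ≤
          ((a : ℝ) ^ (p / 2 - 1) * γ * (1 + δak) / (1 - δa1k)) * ∑ i ∈ Tᶜ, ‖h i‖ ^ p :=
  block_pRIP_implies_weighted_block_pNSP_general n d m k s a p ω δak δa1k γ hp hp1 hω0 hω1 hk hs ha
    has hγ hδak A hRIPu hRIPl hcond
end
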